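/- Let G be a finite connected graph on at least two vertices. Then the strong metric dimension of G equals the vertex cover number of the graph on vertex set V(G) in which two vertices are adjacent if and only if they are mutually maximally distant in G. -/

import Mathlib

open SimpleGraph

variable {V : Type*}

/-- `u` is maximally distant from `v` in `G`: every neighbor `w` of `u`
satisfies `d(v,w) ≤ d(v,u)`. -/
def MaxDistant (G : SimpleGraph V) (u v : V) : Prop :=
  ∀ w, G.Adj u w → G.dist v w ≤ G.dist v u

/-- `u` and `v` are mutually maximally distant in `G`. -/
def MMD (G : SimpleGraph V) (u v : V) : Prop :=
  MaxDistant G u v ∧ MaxDistant G v u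

/-- The boundary of `G`: vertices maximally distant from some vertex. -/
def boundary (G : SimpleGraph V) : Set V := {u | ∃ v, MaxDistant G u v}

/-- The strong resolving graph on the whole vertex set (`G_{SR+I}`):
two vertices are adjacent iff they are distinct and mutually maximally distant. -/
def srGraphI (G : SimpleGraph V) : SimpleGraph V where
  Adj u v := u ≠ v ∧ MMD G u v
  symm := ⟨by
    rintro u v ⟨hne, h1, h2⟩
    exact ⟨hne.symm, h2, h1⟩⟩
  loopless := ⟨by
    rintro u ⟨hne, _⟩
    exact hne rfl⟩

/-- The strong resolving graph `G_SR`, with vertex set the boundary of `G`. -/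
def srGraph (G : SimpleGraph V) : SimpleGraph (boundary G) :=
  (srGraphI G).induce (boundary G)

/-- `u` and `v` are true twins: distinct vertices with equal closed neighborhoods. -/
def TrueTwins (G : SimpleGraph V) (u v : V) : Prop :=
  u ≠ v ∧ insert u (G.neighborSet u) = insert v (G.neighborSet v)

/-- `u` and `v` are false twins: distinct vertices with equal open neighborhoods. -/
def FalseTwins (G : SimpleGraph V) (u v : V) : Prop :=
  u ≠ v ∧ G.neighborSet u = G.neighborSet v

/-- A vertex is simplicial if its neighborhood induces a complete graph. -/
def IsSimplicial (G : SimpleGraph V) (v : V) : Prop :=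
  ∀ a b, G.Adj v a → G.Adj v b → a ≠ b → G.Adj a b

/-- `w` strongly resolves `u` and `v`. -/
def StronglyResolves (G : SimpleGraph V) (w u v : V) : Prop :=
  G.dist w u = G.dist w v + G.dist v u ∨ G.dist w v = G.dist w u + G.dist u v

/-- `S` is a strong metric generator for `G`. -/
def IsStrongMetricGenerator (G : SimpleGraph V) (S : Set V) : Prop :=
  ∀ u v : V, u ≠ v → ∃ w ∈ S, StronglyResolves G w u v

/-- The strong metric dimension of `G`. -/
noncomputable def sdim (G : SimpleGraph V) : ℕ :=
  sInf {n | ∃ S : Set V, S.ncard = n ∧ IsStrongMetricGenerator G S}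

/-- `S` is a vertex cover of `H`. -/
def IsVertexCover (H : SimpleGraph V) (S : Set V) : Prop :=
  ∀ u v : V, H.Adj u v → u ∈ S ∨ v ∈ S

/-- The vertex cover number of `H`. -/
noncomputable def vertexCoverNumber (H : SimpleGraph V) : ℕ :=
  sInf {n | ∃ S : Set V, S.ncard = n ∧ _root_.IsVertexCover H S}

/-- The graph `G*`: distinct vertices adjacent iff at distance at least two
or true twins. -/
def GStar (G : SimpleGraph V) : SimpleGraph V where
  Adj u v := u ≠ v ∧ (2 ≤ G.dist u v ∨ TrueTwins G u v)
  symm := ⟨by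
    rintro u v ⟨hne, h | h⟩
    · exact ⟨hne.symm, Or.inl (by rwa [G.dist_comm])⟩
    · exact ⟨hne.symm, Or.inr ⟨h.1.symm, h.2.symm⟩⟩⟩
  loopless := ⟨by
    rintro u ⟨hne, _⟩
    exact hne rfl⟩

/-- The direct (tensor) product of two graphs. -/
def DirectProd {α β : Type*} (G : SimpleGraph α) (H : SimpleGraph β) :
    SimpleGraph (α × β) where
  Adj x y := G.Adj x.1 y.1 ∧ H.Adj x.2 y.2
  symm := ⟨fun _ _ h => ⟨h.1.symm, h.2.symm⟩⟩
  loopless := ⟨fun x h => G.irrefl h.1⟩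

/-- The strong product of two graphs. -/
def StrongProd {α β : Type*} (G : SimpleGraph α) (H : SimpleGraph β) :
    SimpleGraph (α × β) where
  Adj x y := x ≠ y ∧ (x.1 = y.1 ∨ G.Adj x.1 y.1) ∧ (x.2 = y.2 ∨ H.Adj x.2 y.2)
  symm := ⟨by
    rintro x y ⟨hne, h1, h2⟩
    exact ⟨hne.symm, h1.imp Eq.symm Adj.symm, h2.imp Eq.symm Adj.symm⟩⟩
  loopless := ⟨by
    rintro x ⟨hne, _⟩
    exact hne rfl⟩

/-- The Cartesian sum (disjunctive product) of two graphs. -/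
def CartSum {α β : Type*} (G : SimpleGraph α) (H : SimpleGraph β) :
    SimpleGraph (α × β) where
  Adj x y := G.Adj x.1 y.1 ∨ H.Adj x.2 y.2
  symm := ⟨fun _ _ h => h.imp Adj.symm Adj.symm⟩
  loopless := ⟨fun x h => h.elim G.irrefl H.irrefl⟩

/-- The lexicographic product of two graphs. -/
def LexProd {α β : Type*} (G : SimpleGraph α) (H : SimpleGraph β) :
    SimpleGraph (α × β) where
  Adj x y := G.Adj x.1 y.1 ∨ (x.1 = y.1 ∧ H.Adj x.2 y.2)
  symm := ⟨fun _ _ h => h.imp Adj.symm (fun h => ⟨h.1.symm, h.2.symm⟩)⟩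
  loopless := ⟨fun x h => h.elim G.irrefl (fun h => H.irrefl h.2)⟩

/-- The disjoint union of `n` copies of the complete graph on `m` vertices. -/
def CopiesComplete (n m : ℕ) : SimpleGraph (Fin n × Fin m) where
  Adj x y := x.1 = y.1 ∧ x.2 ≠ y.2
  symm := ⟨fun _ _ h => ⟨h.1.symm, h.2.symm⟩⟩
  loopless := ⟨fun x h => h.2 rfl⟩

/-- Every pair of vertices lies on a common cycle of length five. -/
def C5Connected (G : SimpleGraph V) : Prop :=
  ∀ u v : V, ∃ (w : V) (c : G.Walk w w), c.IsCycle ∧ c.length = 5 ∧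
    u ∈ c.support ∧ v ∈ c.support

/-!
A vertex `w` strongly resolving a mutually maximally distant pair `u, v` lies on a geodesic
through `u` and `v` with one of them in the interior; since neither can be extended away from the
other, `w ∈ {u, v}`. Hence every strong metric generator is a vertex cover of the strong resolving
graph. Conversely, for `u ≠ v` walk from `u` away from `v` until reaching a vertex `u'` maximally
distant from `v`, then from `v` away from `u'` until reaching `v'`; the pair `u', v'` is mutually
maximally distant, `u'` strongly resolves `u, v` and `v'` strongly resolves `u, v`, so every
vertex cover is a strong metric generator.
-/

namespace SimpleGraph

variable {G : SimpleGraph V}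

lemma Reachable.exists_adj_dist_lt {v w : V} (hr : G.Reachable v w) (hne : v ≠ w) :
    ∃ x, G.Adj v x ∧ G.dist x w < G.dist v w := by
  obtain ⟨p, hp⟩ := hr.exists_walk_length_eq_dist
  cases p with
  | nil => exact absurd rfl hne
  | cons hadj q =>
    refine ⟨_, hadj, ?_⟩
    have := dist_le q
    rw [← hp, Walk.length_cons]
    omega

lemma Connected.eq_of_maxDistant_of_dist_eq_add (hG : G.Connected) {u v w : V}
    (hv : MaxDistant G v u) (h : G.dist w u = G.dist w v + G.dist v u) : w = v := by
  by_contra hwv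
  obtain ⟨x, hvx, hxw⟩ := (hG.preconnected v w).exists_adj_dist_lt (Ne.symm hwv)
  have hux : G.dist u x ≤ G.dist u v := hv x hvx
  have huw : G.dist u w ≤ G.dist u x + G.dist x w := hG.dist_triangle
  have := G.dist_comm (u := w) (v := u)
  have := G.dist_comm (u := w) (v := v)
  have := G.dist_comm (u := v) (v := u)
  omega

lemma Connected.eq_or_eq_of_stronglyResolves_of_mmd (hG : G.Connected) {u v w : V}
    (huv : MMD G u v) (hw : StronglyResolves G w u v) : w = u ∨ w = v :=
  hw.elim (fun h => Or.inr (hG.eq_of_maxDistant_of_dist_eq_add huv.2 h))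
    (fun h => Or.inl (hG.eq_of_maxDistant_of_dist_eq_add huv.1 h))

lemma Connected.maxDistant_of_dist_eq_add (hG : G.Connected) {u v w : V}
    (hu : MaxDistant G u v) (h : G.dist w u = G.dist w v + G.dist v u) : MaxDistant G u w :=
  fun x hx => calc
    G.dist w x ≤ G.dist w v + G.dist v x := hG.dist_triangle
    _ ≤ G.dist w v + G.dist v u := Nat.add_le_add_left (hu x hx) _
    _ = G.dist w u := h.symm

lemma Connected.exists_maxDistant_dist_eq_add [Finite V] (hG : G.Connected) (v u : V) :
    ∃ u', MaxDistant G u' v ∧ G.dist v u' = G.dist v u + G.dist u u' := by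
  obtain ⟨u', hu', hmax⟩ := Set.exists_max_image {y | G.dist v y = G.dist v u + G.dist u y}
    (G.dist v) (Set.toFinite _) ⟨u, by simp⟩
  replace hu' : G.dist v u' = G.dist v u + G.dist u u' := hu'
  refine ⟨u', fun x hx => ?_, hu'⟩
  by_contra! hlt
  have hvx : G.dist v x ≤ G.dist v u + G.dist u x := hG.dist_triangle
  have hux : G.dist u x ≤ G.dist u u' + G.dist u' x := hG.dist_triangle
  have hu'x : G.dist u' x = 1 := dist_eq_one_iff_adj.mpr hx
  have := hmax x (show G.dist v x = G.dist v u + G.dist u x by omega)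
  omega

lemma Connected.exists_srGraphI_adj_stronglyResolves [Finite V] (hG : G.Connected) {u v : V}
    (huv : u ≠ v) : ∃ u' v', (srGraphI G).Adj u' v' ∧
      StronglyResolves G u' u v ∧ StronglyResolves G v' u v := by
  obtain ⟨u', hu', hu'd⟩ := hG.exists_maxDistant_dist_eq_add v u
  obtain ⟨v', hv', hv'd⟩ := hG.exists_maxDistant_dist_eq_add u' v
  have := G.dist_comm (u := u') (v := v)
  have := G.dist_comm (u := u) (v := v)
  have := G.dist_comm (u := u) (v := u')
  have hv'u' : G.dist v' u' = G.dist v' v + G.dist v u' := by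
    have := G.dist_comm (u := u') (v := v')
    have := G.dist_comm (u := v) (v := v')
    omega
  have hne : u' ≠ v' := by
    rintro rfl
    rw [dist_self] at hv'd
    obtain rfl : v = u' := hG.dist_eq_zero_iff.mp (by omega)
    exact huv (hG.dist_eq_zero_iff.mp (by rw [dist_self] at hu'd; omega))
  refine ⟨u', v', ⟨hne, hG.maxDistant_of_dist_eq_add hu' hv'u', hv'⟩, Or.inr (by omega), Or.inl ?_⟩
  have : G.dist v' u' ≤ G.dist v' u + G.dist u u' := hG.dist_triangle
  have : G.dist v' u ≤ G.dist v' v + G.dist v u := hG.dist_triangle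
  omega

theorem Connected.isStrongMetricGenerator_iff_isVertexCover [Finite V] (hG : G.Connected)
    {S : Set V} : IsStrongMetricGenerator G S ↔ _root_.IsVertexCover (srGraphI G) S := by
  constructor
  · rintro hS u v ⟨huv, hmmd⟩
    obtain ⟨w, hwS, hw⟩ := hS u v huv
    rcases hG.eq_or_eq_of_stronglyResolves_of_mmd hmmd hw with rfl | rfl
    exacts [Or.inl hwS, Or.inr hwS]
  · intro hS u v huv
    obtain ⟨u', v', hadj, hu', hv'⟩ := hG.exists_srGraphI_adj_stronglyResolves huv
    exact (hS u' v' hadj).elim (⟨u', ·, hu'⟩) (⟨v', ·, hv'⟩)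

end SimpleGraph

theorem stmt1_general [Fintype V] (G : SimpleGraph V) (hG : G.Connected) :
    sdim G = vertexCoverNumber (srGraphI G) := by
  simp only [sdim, vertexCoverNumber, hG.isStrongMetricGenerator_iff_isVertexCover]

theorem stmt1 [Fintype V] (G : SimpleGraph V) (hG : G.Connected)
    (hn : 2 ≤ Fintype.card V) :
    sdim G = vertexCoverNumber (srGraphI G) :=
  stmt1_general G hG
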